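/- arXiv:1210.1888 — 6 statements merged into one kernel-verified Lean document; each statement's English description precedes it below -/
import Mathlib

section
/- Let v_p, v_q, v_r, u_p, u_q, u_r ∈ ℂ³ satisfy the flag conditions u_p·v_p = 0, u_q·v_q = 0, u_r·v_r = 0. Then det(v_p, v_q, v_r) · det(u_p, u_q, u_r) = (u_p·v_r)(u_r·v_q)(u_q·v_p) + (u_q·v_r)(u_r·v_p)(u_p·v_q). (This is the paper's 3-term skein relation J_{pqr} J^{pqr} = J_r^p J_q^r J_p^q + J_r^q J_p^r J_q^p for special invariants attached to flags.) -/
/-!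
Since `det V * det U = det (V * Uᵀ)`, the left-hand side is the determinant of the pairing
matrix `(u_j ⬝ᵥ v_i)`. The flag conditions make its diagonal vanish, and a `3 × 3` determinant
with zero diagonal consists of just the two cyclic terms of the Leibniz expansion.
-/

open Matrix

theorem Matrix.det_mul_det_eq_det_of_dotProduct {n R : Type*} [Fintype n] [DecidableEq n]
    [CommRing R] (v u : n → n → R) :
    det (of v) * det (of u) = det (of fun i j => u j ⬝ᵥ v i) := by
  rw [← det_transpose (of u), ← det_mul]
  congr 1
  ext i j
  exact dotProduct_comm _ _

theorem Matrix.det_fin_three_of_diag_eq_zero {R : Type*} [CommRing R]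
    (M : Matrix (Fin 3) (Fin 3) R) (hM : ∀ i, M i i = 0) :
    M.det = M 0 1 * M 1 2 * M 2 0 + M 0 2 * M 1 0 * M 2 1 := by
  rw [det_fin_three, hM 0, hM 1, hM 2]
  ring

/-- 3-term skein relation `J_{pqr} J^{pqr} = J_r^p J_q^r J_p^q + J_r^q J_p^r J_q^p`
for special invariants attached to flags `(v_p, u_p), (v_q, u_q), (v_r, u_r)` in `ℂ³`. -/
theorem skein_Jpqr (vp vq vr up uq ur : Fin 3 → ℂ)
    (hp : up ⬝ᵥ vp = 0) (hq : uq ⬝ᵥ vq = 0) (hr : ur ⬝ᵥ vr = 0) :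
    Matrix.det (Matrix.of ![vp, vq, vr]) * Matrix.det (Matrix.of ![up, uq, ur]) =
      (up ⬝ᵥ vr) * (ur ⬝ᵥ vq) * (uq ⬝ᵥ vp) + (uq ⬝ᵥ vr) * (ur ⬝ᵥ vp) * (up ⬝ᵥ vq) := by
  rw [det_mul_det_eq_det_of_dotProduct, det_fin_three_of_diag_eq_zero]
  · simp only [of_apply, Matrix.cons_val]
    ring
  · intro i
    fin_cases i <;> assumption
end

section
/- Let v_p, v_r, v_s, u_p, u_q, u_r ∈ ℂ³ satisfy the flag conditions u_p·v_p = 0 and u_r·v_r = 0. Then (u_r·v_p) · ((v_r×v_s)·(u_p×u_q)) = (u_q·v_p)(u_p·v_r)(u_r·v_s) + det(v_p, v_r, v_s) · det(u_p, u_q, u_r). (This is the paper's 3-term skein relation J_p^r J_{rs}^{pq} = J_p^q J_r^p J_s^r + J_{prs} J^{pqr}.) -/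
/-!
Both sides are polynomials in the pairings `u_j ⬝ᵥ v_i`: the Binet–Cauchy identity
`(a × b) ⬝ᵥ (c × d) = (a ⬝ᵥ c)(b ⬝ᵥ d) - (a ⬝ᵥ d)(b ⬝ᵥ c)` rewrites the left side, and
`det (v_p, v_r, v_s) * det (u_p, u_q, u_r)` is the determinant of the pairing matrix
`(v_i ⬝ᵥ u_j)`. The flag conditions make two entries of that matrix vanish, after which its
cofactor expansion is exactly the left side minus `J_p^q J_r^p J_s^r`.
-/

open Matrix

theorem det_of_mul_det_of {n R : Type*} [Fintype n] [DecidableEq n] [CommRing R]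
    (v u : n → n → R) : (of v).det * (of u).det = (of fun i j => v i ⬝ᵥ u j).det := by
  rw [← det_transpose (of u), ← det_mul]
  rfl

/-- 3-term skein relation `J_p^r J_{rs}^{pq} = J_p^q J_r^p J_s^r + J_{prs} J^{pqr}`. -/
theorem skein_J_pr_Jrs_pq (vp vr vs up uq ur : Fin 3 → ℂ)
    (hp : up ⬝ᵥ vp = 0) (hr : ur ⬝ᵥ vr = 0) :
    (ur ⬝ᵥ vp) * ((crossProduct vr vs) ⬝ᵥ (crossProduct up uq)) =
      (uq ⬝ᵥ vp) * (up ⬝ᵥ vr) * (ur ⬝ᵥ vs) +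
        Matrix.det (Matrix.of ![vp, vr, vs]) * Matrix.det (Matrix.of ![up, uq, ur]) := by
  rw [cross_dot_cross, det_of_mul_det_of, det_fin_three]
  simp only [of_apply, cons_val_zero, cons_val_one, cons_val_two, head_cons, tail_cons]
  simp only [dotProduct_comm vp, dotProduct_comm vr, dotProduct_comm vs, hp, hr]
  ring
end

section
/- Let u_p, u_{p+1}, v_p, v_{p+1}, v_{p+2}, u_s ∈ ℂ³ satisfy the partner relations u_{p+1} = v_{p+1} × v_{p+2} and v_p = u_p × u_{p+1} (the case where vertex p is white and vertex p+1 is black). Then (u_p·v_{p+2})(u_s·v_{p+1}) = (u_p·v_{p+1})(u_s·v_{p+2}) + u_s·v_p. (This is the paper's relation J_{p+2}^p J_{p+1}^s = J_{p+1}^p J_{p+2}^s + J_p^s.) -/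
open Matrix

/-- The relation `J_{p+2}^p J_{p+1}^s = J_{p+1}^p J_{p+2}^s + J_p^s`, in the case where
vertex `p` is white and vertex `p+1` is black, so that the partner relations
`u_{p+1} = v_{p+1} × v_{p+2}` and `v_p = u_p × u_{p+1}` hold. -/
theorem skein_white_black (up up1 vp vp1 vp2 us : Fin 3 → ℂ)
    (h1 : up1 = crossProduct vp1 vp2) (h2 : vp = crossProduct up up1) :
    (up ⬝ᵥ vp2) * (us ⬝ᵥ vp1) = (up ⬝ᵥ vp1) * (us ⬝ᵥ vp2) + us ⬝ᵥ vp := by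
  rw [h2, h1, cross_cross_eq_smul_sub_smul', dotProduct_sub, dotProduct_smul, dotProduct_smul,
    smul_eq_mul, smul_eq_mul, dotProduct_comm vp1 up]
  ring
end

section
/- Let v_p, v_{p+1}, u_p, u_{p+1}, u_{p+2}, v_s ∈ ℂ³ satisfy the partner relations v_{p+1} = u_{p+1} × u_{p+2} and u_p = v_p × v_{p+1} (the case where vertex p is black and vertex p+1 is white). Then (u_{p+2}·v_p)(u_{p+1}·v_s) = (u_{p+1}·v_p)(u_{p+2}·v_s) + u_p·v_s. (This is the paper's relation J_p^{p+2} J_s^{p+1} = J_p^{p+1} J_s^{p+2} + J_s^p.) -/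
open Matrix

/-- The relation `J_p^{p+2} J_s^{p+1} = J_p^{p+1} J_s^{p+2} + J_s^p`, in the case where
vertex `p` is black and vertex `p+1` is white, so that the partner relations
`v_{p+1} = u_{p+1} × u_{p+2}` and `u_p = v_p × v_{p+1}` hold. -/
theorem skein_black_white (vp vp1 up up1 up2 vs : Fin 3 → ℂ)
    (h1 : vp1 = crossProduct up1 up2) (h2 : up = crossProduct vp vp1) :
    (up2 ⬝ᵥ vp) * (up1 ⬝ᵥ vs) = (up1 ⬝ᵥ vp) * (up2 ⬝ᵥ vs) + up ⬝ᵥ vs := by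
  subst h1 h2
  rw [cross_cross_eq_smul_sub_smul', sub_dotProduct, smul_dotProduct, smul_dotProduct,
    smul_eq_mul, smul_eq_mul, dotProduct_comm vp up2]
  ring
end

section
/- Let u_p, u_{p+1}, u_{p+2}, u_{p+3}, v_p, v_{p+1}, v_{p+2} ∈ ℂ³ satisfy the partner relations v_p = u_p × u_{p+1}, u_{p+1} = v_{p+1} × v_{p+2}, and v_{p+2} = u_{p+2} × u_{p+3}. Then u_{p+3}·v_p = (u_{p+3}·v_{p+1}) · (u_p·v_{p+2}). (This is the paper's factorization rule: if p is white, p+1 is black, and p+2 is white, then J_p^{p+3} = J_{p+1}^{p+3} J_{p+2}^p.) -/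
/-!
Expanding `v_p = u_p × (v_{p+1} × v_{p+2})` by the vector triple product gives
`u_{p+3}·v_p = (u_p·v_{p+2})(u_{p+3}·v_{p+1}) - (u_p·v_{p+1})(u_{p+3}·v_{p+2})`, and the second term
vanishes because `v_{p+2} = u_{p+2} × u_{p+3}` is orthogonal to `u_{p+3}`.
-/

open Matrix

/-- Factorization rule: if `p` is white, `p+1` is black, and `p+2` is white, then
`J_p^{p+3} = J_{p+1}^{p+3} J_{p+2}^p`, given the partner relations
`v_p = u_p × u_{p+1}`, `u_{p+1} = v_{p+1} × v_{p+2}`, `v_{p+2} = u_{p+2} × u_{p+3}`. -/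
theorem factor_J_p_p3 (up up1 up2 up3 vp vp1 vp2 : Fin 3 → ℂ)
    (h1 : vp = crossProduct up up1) (h2 : up1 = crossProduct vp1 vp2)
    (h3 : vp2 = crossProduct up2 up3) :
    up3 ⬝ᵥ vp = (up3 ⬝ᵥ vp1) * (up ⬝ᵥ vp2) := by
  have hvp2 : up3 ⬝ᵥ vp2 = 0 := h3 ▸ dot_cross_self up2 up3
  calc up3 ⬝ᵥ vp = up3 ⬝ᵥ ((up ⬝ᵥ vp2) • vp1 - (vp1 ⬝ᵥ up) • vp2) := by
        rw [h1, h2, cross_cross_eq_smul_sub_smul']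
    _ = (up ⬝ᵥ vp2) * (up3 ⬝ᵥ vp1) - (vp1 ⬝ᵥ up) * (up3 ⬝ᵥ vp2) := by
        rw [dotProduct_sub, dotProduct_smul, dotProduct_smul, smul_eq_mul, smul_eq_mul]
    _ = (up3 ⬝ᵥ vp1) * (up ⬝ᵥ vp2) := by
        rw [hvp2, mul_zero, sub_zero, mul_comm]
end

section
/- Let u_p, u_{p+1}, u_q, u_r, v_p, v_{p+2} ∈ ℂ³ satisfy the partner relation v_p = u_p × u_{p+1} and the incidence condition u_{p+1}·v_{p+2} = 0. Then (v_p × v_{p+2})·(u_q × u_r) = (u_p·v_{p+2}) · det(u_{p+1}, u_q, u_r). (This is the paper's factorization rule: if p is white, p+1 is black, and p+2 is white, then J_{p(p+2)}^{qr} = J_{p+2}^p J^{(p+1)qr}; note that u_{p+1}·v_{p+2} = 0 follows from the partner relation u_{p+1} = v_{p+1} × v_{p+2}.) -/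
open Matrix

theorem cross_cross_eq_smul_of_dotProduct_eq_zero {R : Type*} [CommRing R]
    {u v w : Fin 3 → R} (h : v ⬝ᵥ w = 0) : u ⨯₃ v ⨯₃ w = (u ⬝ᵥ w) • v := by
  rw [cross_cross_eq_smul_sub_smul, h, zero_smul, sub_zero]

/-- Factorization rule: if `p` is white, `p+1` is black, and `p+2` is white, then
`J_{p(p+2)}^{qr} = J_{p+2}^p J^{(p+1)qr}`, given the partner relation
`v_p = u_p × u_{p+1}` and the incidence condition `u_{p+1} · v_{p+2} = 0`. -/
theorem factor_Jp_p2_qr (up up1 uq ur vp vp2 : Fin 3 → ℂ)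
    (hpartner : vp = crossProduct up up1) (hinc : up1 ⬝ᵥ vp2 = 0) :
    (crossProduct vp vp2) ⬝ᵥ (crossProduct uq ur) =
      (up ⬝ᵥ vp2) * Matrix.det (Matrix.of ![up1, uq, ur]) := by
  rw [hpartner, cross_cross_eq_smul_of_dotProduct_eq_zero hinc, smul_dotProduct,
    triple_product_eq_det, smul_eq_mul]
  rfl
end
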